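/- For every real m × n matrix A, lindisc(A) ≤ 2·herdisc(A). -/

import Mathlib

/-!
For a dyadic `x / 2 ^ k` in the cube, colour the coordinates with odd numerator by a
colouring of discrepancy at most `D = herdisc A` on that column set and move them by `± 2⁻ᵏ`:
this costs at most `D / 2 ^ k` in every row and leaves a point with denominator `2 ^ (k - 1)`.
Iterating down to denominator `1` and then colouring the zero coordinates costs
`D (1 + 1/2 + ⋯ + 2⁻ᵏ) < 2 D`, and a general point of the cube is within any `δ > 0` of a
dyadic one.
-/

open Finset

namespace Discrepancy

noncomputable def sign (b : Bool) : ℝ := if b then 1 else -1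

def IsHerdiscBound {ι κ : Type*} (A : Matrix ι κ ℝ) (D : ℝ) : Prop :=
  ∀ J : Finset κ, ∃ ε : κ → Bool, ∀ i, |∑ j ∈ J, A i j * sign (ε j)| ≤ D

theorem isHerdiscBound_iSup {ι κ : Type*} [Finite ι] [Fintype κ] (A : Matrix ι κ ℝ) :
    IsHerdiscBound A (⨆ J : Finset κ, ⨅ ε : κ → Bool, ⨆ i, |∑ j ∈ J, A i j * sign (ε j)|) := by
  intro J
  obtain ⟨ε, hε⟩ := exists_eq_ciInf_of_finite
    (f := fun ε : κ → Bool => ⨆ i, |∑ j ∈ J, A i j * sign (ε j)|)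
  refine ⟨ε, fun i => ?_⟩
  calc |∑ j ∈ J, A i j * sign (ε j)|
      ≤ ⨆ i, |∑ j ∈ J, A i j * sign (ε j)| :=
        le_ciSup (f := fun i => |∑ j ∈ J, A i j * sign (ε j)|) (Finite.bddAbove_range _) i
    _ = ⨅ ε : κ → Bool, ⨆ i, |∑ j ∈ J, A i j * sign (ε j)| := hε
    _ ≤ _ :=
        le_ciSup (f := fun J : Finset κ => ⨅ ε : κ → Bool, ⨆ i, |∑ j ∈ J, A i j * sign (ε j)|)
          (Finite.bddAbove_range _) J

theorem exists_halve (x q : ℤ) (hx : |x| ≤ 2 * q) (s : Bool) :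
    ∃ y : ℤ, |y| ≤ q ∧ (x : ℝ) = 2 * y + if Odd x then sign s else 0 := by
  rw [abs_le] at hx
  rcases Int.even_or_odd' x with ⟨c, rfl | rfl⟩
  · refine ⟨c, abs_le.mpr ⟨by omega, by omega⟩, ?_⟩
    simp [Int.not_odd_iff_even]
  · have hodd : Odd (2 * c + 1) := odd_two_mul_add_one c
    cases s
    · exact ⟨c + 1, abs_le.mpr ⟨by omega, by omega⟩, by simp [hodd, sign]; ring⟩
    · exact ⟨c, abs_le.mpr ⟨by omega, by omega⟩, by simp [hodd, sign]⟩

theorem eq_sign_of_abs_le_one {x : ℤ} (hx : |x| ≤ 1) (h0 : x ≠ 0) :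
    (x : ℝ) = sign (decide (0 < x)) := by
  rw [abs_le] at hx
  obtain rfl | rfl : x = -1 ∨ x = 1 := by omega
  all_goals norm_num [sign]

variable {ι κ : Type*} [Fintype κ] {A : Matrix ι κ ℝ} {D : ℝ}

theorem IsHerdiscBound.exists_signs_dyadic (hD : IsHerdiscBound A D) (k : ℕ) (x : κ → ℤ)
    (hx : ∀ j, |x j| ≤ 2 ^ k) :
    ∃ b : κ → Bool, ∀ i,
      |∑ j, A i j * ((x j : ℝ) / 2 ^ k - sign (b j))| ≤ (2 - 1 / 2 ^ k) * D := by
  induction k generalizing x with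
  | zero =>
    obtain ⟨ε, hε⟩ := hD {j | x j = 0}
    refine ⟨fun j => if x j = 0 then ε j else decide (0 < x j), fun i => ?_⟩
    have hsum : ∑ j, A i j * ((x j : ℝ) / 2 ^ 0 - sign (if x j = 0 then ε j else decide (0 < x j)))
        = -∑ j with x j = 0, A i j * sign (ε j) := by
      rw [sum_filter, ← sum_neg_distrib]
      refine sum_congr rfl fun j _ => ?_
      by_cases h0 : x j = 0
      · simp [h0]
      · simp [h0, ← eq_sign_of_abs_le_one (hx j) h0]
    rw [hsum, abs_neg]
    linarith [hε i]
  | succ k ih =>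
    obtain ⟨ε, hε⟩ := hD {j | Odd (x j)}
    choose y hy hxy using fun j => exists_halve (x j) (2 ^ k) (pow_succ' (2 : ℤ) k ▸ hx j) (ε j)
    obtain ⟨b, hb⟩ := ih y hy
    refine ⟨b, fun i => ?_⟩
    have hsplit : ∑ j, A i j * ((x j : ℝ) / 2 ^ (k + 1) - sign (b j))
        = ∑ j, A i j * ((y j : ℝ) / 2 ^ k - sign (b j))
          + (∑ j with Odd (x j), A i j * sign (ε j)) / 2 ^ (k + 1) := by
      rw [sum_filter, sum_div, ← sum_add_distrib]
      refine sum_congr rfl fun j _ => ?_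
      rw [hxy j]
      split_ifs <;> field_simp <;> ring
    calc |∑ j, A i j * ((x j : ℝ) / 2 ^ (k + 1) - sign (b j))|
        ≤ |∑ j, A i j * ((y j : ℝ) / 2 ^ k - sign (b j))|
          + |∑ j with Odd (x j), A i j * sign (ε j)| / 2 ^ (k + 1) := by
          rw [hsplit]
          exact (abs_add_le _ _).trans_eq (by rw [abs_div, abs_pow, abs_two])
      _ ≤ (2 - 1 / 2 ^ k) * D + D / 2 ^ (k + 1) := by gcongr; exacts [hb i, hε i]
      _ = (2 - 1 / 2 ^ (k + 1)) * D := by field_simp; ring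

theorem abs_floor_mul_two_pow_le {r : ℝ} (hr : |r| ≤ 1) (k : ℕ) : |⌊r * 2 ^ k⌋| ≤ 2 ^ k := by
  rw [abs_le] at hr ⊢
  have h2k : (0 : ℝ) < 2 ^ k := by positivity
  constructor
  · exact Int.le_floor.mpr (by push_cast; nlinarith)
  · exact Int.floor_le_iff.mpr (by push_cast; nlinarith)

theorem abs_sub_floor_mul_two_pow_div_le (r : ℝ) (k : ℕ) :
    |r - ⌊r * 2 ^ k⌋ / 2 ^ k| ≤ 1 / 2 ^ k := by
  have hfract : r - ⌊r * 2 ^ k⌋ / 2 ^ k = Int.fract (r * 2 ^ k) / 2 ^ k := by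
    rw [Int.fract]; field_simp
  rw [hfract, abs_div, abs_of_nonneg (Int.fract_nonneg _), abs_of_pos (by positivity)]
  gcongr
  exact (Int.fract_lt_one _).le

theorem abs_sum_mul_le_sum_abs_mul {a u : κ → ℝ} {r : ℝ} (hu : ∀ j, |u j| ≤ r) :
    |∑ j, a j * u j| ≤ (∑ j, |a j|) * r := by
  rw [sum_mul]
  refine (abs_sum_le_sum_abs _ _).trans (sum_le_sum fun j _ => ?_)
  rw [abs_mul]
  exact mul_le_mul_of_nonneg_left (hu j) (abs_nonneg _)

theorem IsHerdiscBound.exists_signs_le [Fintype ι] (hD : IsHerdiscBound A D) (hD0 : 0 ≤ D)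
    {β : κ → ℝ} (hβ : ∀ j, β j ∈ Set.Icc (-1 : ℝ) 1) {δ : ℝ} (hδ : 0 < δ) :
    ∃ b : κ → Bool, ∀ i, |∑ j, A i j * (β j - sign (b j))| ≤ 2 * D + δ := by
  set C := ∑ i, ∑ j, |A i j|
  obtain ⟨k, hk⟩ := pow_unbounded_of_one_lt (C / δ) one_lt_two
  set γ : κ → ℝ := fun j => ⌊β j * 2 ^ k⌋ / 2 ^ k
  obtain ⟨b, hb⟩ := hD.exists_signs_dyadic k (fun j => ⌊β j * 2 ^ k⌋)
    fun j => abs_floor_mul_two_pow_le (abs_le.mpr (hβ j)) k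
  refine ⟨b, fun i => ?_⟩
  have hround : |∑ j, A i j * (β j - γ j)| ≤ δ :=
    calc |∑ j, A i j * (β j - γ j)|
        ≤ (∑ j, |A i j|) * (1 / 2 ^ k) :=
          abs_sum_mul_le_sum_abs_mul fun j => abs_sub_floor_mul_two_pow_div_le (β j) k
      _ ≤ C * (1 / 2 ^ k) := by
          gcongr
          exact single_le_sum (f := fun i => ∑ j, |A i j|)
            (fun i _ => sum_nonneg fun j _ => abs_nonneg _) (mem_univ i)
      _ ≤ δ := by
          rw [div_lt_iff₀ hδ] at hk
          rw [mul_one_div, div_le_iff₀ (by positivity)]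
          linarith
  have hsum : ∑ j, A i j * (β j - sign (b j))
      = ∑ j, A i j * (β j - γ j) + ∑ j, A i j * (γ j - sign (b j)) := by
    rw [← sum_add_distrib]
    exact sum_congr rfl fun j _ => by ring
  have hk0 : 0 ≤ 1 / (2 : ℝ) ^ k * D := by positivity
  calc |∑ j, A i j * (β j - sign (b j))|
      ≤ δ + (2 - 1 / 2 ^ k) * D := by
        rw [hsum]
        exact (abs_add_le _ _).trans (add_le_add hround (hb i))
    _ ≤ 2 * D + δ := by linarith

end Discrepancy

open Discrepancy in
/-- **Beck–Spencer / Lovász–Spencer–Vesztergombi:** `lindisc(A) ≤ 2 herdisc(A)`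
for every real `m × n` matrix `A`. Here
`lindisc(A) = sup_{β ∈ [−1,1]^n} inf_{b ∈ {−1,1}^n} ‖A(β−b)‖_∞` and
`herdisc(A) = sup_{J ⊆ {1,…,n}} inf_{b ∈ {−1,1}^J} ‖(A|_J) b‖_∞`, with sign
vectors encoded by `ε : Fin n → Bool` (`true` ↦ `1`, `false` ↦ `−1`). -/
theorem lindisc_le_two_herdisc
    (m n : ℕ) (A : Matrix (Fin m) (Fin n) ℝ) :
    (⨆ β ∈ {β : Fin n → ℝ | ∀ j, β j ∈ Set.Icc (-1 : ℝ) 1},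
        ⨅ ε : Fin n → Bool,
          ⨆ i : Fin m, |∑ j, A i j * (β j - (if ε j then 1 else -1))|)
      ≤ 2 * ⨆ J : Finset (Fin n),
          ⨅ ε : Fin n → Bool,
            ⨆ i : Fin m, |∑ j ∈ J, A i j * (if ε j then (1 : ℝ) else -1)| := by
  have hD : IsHerdiscBound A _ := isHerdiscBound_iSup A
  have hD0 : 0 ≤ ⨆ J : Finset (Fin n), ⨅ ε : Fin n → Bool, ⨆ i : Fin m,
      |∑ j ∈ J, A i j * (if ε j then (1 : ℝ) else -1)| :=
    Real.iSup_nonneg fun _ => Real.iInf_nonneg fun _ => Real.iSup_nonneg fun _ => abs_nonneg _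
  refine Real.iSup_le (fun β => Real.iSup_le (fun hβ => ?_) (by positivity)) (by positivity)
  refine le_of_forall_pos_le_add fun δ hδ => ?_
  obtain ⟨b, hb⟩ := hD.exists_signs_le hD0 hβ hδ
  exact (ciInf_le (Finite.bddBelow_range _) b).trans (Real.iSup_le hb (by positivity))
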